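/- arXiv:2512.17035 — 2 statements merged into one kernel-verified Lean document; each statement's English description precedes it below -/
import Mathlib

section
/- Let Ω₀ ∈ ℝ² be a fixed unit vector and ρ₀, ω̄₀ smooth functions on ℝ² with ρ₀ > 0 satisfying ρ₀ ω̄₀ = (1/κ) ∇ρ₀ · Ω₀^⊥. Then ρ(t,x) = ρ₀(x − c₁ Ω₀ t), ω̄(t,x) = ω̄₀(x − c₁ Ω₀ t), Ω(t,x) = Ω₀ is a solution of the macroscopic Vicsek–Kuramoto system. -/
open Real RealInnerProductSpace

local notation "E" => EuclideanSpace ℝ (Fin 2)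

/-- Divergence of a planar vector field. -/
noncomputable def divVF (F : E → E) (x : E) : ℝ :=
  ∑ i : Fin 2, fderiv ℝ F x (EuclideanSpace.single i 1) i

/-- Counterclockwise rotation by π/2. -/
noncomputable def perp (v : E) : E :=
  EuclideanSpace.single 0 (-(v 1)) + EuclideanSpace.single 1 (v 0)

private lemma hasFDerivAt_translate (f : E → ℝ) (hf : ContDiff ℝ (⊤ : ℕ∞) f) (c x : E) :
    HasFDerivAt (fun y => f (y - c)) (fderiv ℝ f (x - c)) x := by
  have h := ((hf.differentiable (by simp) (x - c)).hasFDerivAt).comp x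
    ((hasFDerivAt_id x).sub_const c)
  simpa [Function.comp_def] using h

private lemma hasDerivAt_transport (f : E → ℝ) (hf : ContDiff ℝ (⊤ : ℕ∞) f) (c₁ : ℝ) (Ω₀ x : E)
    (t : ℝ) :
    HasDerivAt (fun s => f (x - (c₁ * s) • Ω₀))
      (-(fderiv ℝ f (x - (c₁ * t) • Ω₀) (c₁ • Ω₀))) t := by
  have hg : HasDerivAt (fun s : ℝ => x - (c₁ * s) • Ω₀) (-(c₁ • Ω₀)) t := by
    have h2 : HasDerivAt (fun s : ℝ => (c₁ * s) • Ω₀) (c₁ • Ω₀) t := by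
      have h1 : HasDerivAt (fun s : ℝ => c₁ * s) c₁ t := by
        simpa using (hasDerivAt_id t).const_mul c₁
      simpa using h1.smul_const Ω₀
    simpa using h2.const_sub x
  have := ((hf.differentiable (by simp) _).hasFDerivAt).comp_hasDerivAt t hg
  simpa [Function.comp_def] using this

private lemma divVF_smul_const (f : E → ℝ) (x : E) (hf : DifferentiableAt ℝ f x) (v : E) :
    divVF (fun y => f y • v) x = fderiv ℝ f x v := by
  have h : fderiv ℝ (fun y => f y • v) x = (fderiv ℝ f x).smulRight v :=
    (hf.hasFDerivAt.smul_const v).fderiv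
  have hv : v = v 0 • EuclideanSpace.single (0 : Fin 2) 1 + v 1 • EuclideanSpace.single 1 1 := by
    ext j; fin_cases j <;> simp [EuclideanSpace.single_apply]
  rw [divVF, h]
  conv_rhs => rw [hv]
  simp [Fin.sum_univ_two, smul_eq_mul]
  ring

private lemma transport_eq (f : E → ℝ) (hf : ContDiff ℝ (⊤ : ℕ∞) f) (c₁ : ℝ) (Ω₀ : E) (t : ℝ)
    (x : E) :
    deriv (fun s => f (x - (c₁ * s) • Ω₀)) t
      + c₁ * divVF (fun y => f (y - (c₁ * t) • Ω₀) • Ω₀) x = 0 := by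
  have hd := (hasDerivAt_transport f hf c₁ Ω₀ x t).deriv
  have hfd := hasFDerivAt_translate f hf ((c₁ * t) • Ω₀) x
  have hdiv : divVF (fun y => f (y - (c₁ * t) • Ω₀) • Ω₀) x
      = fderiv ℝ f (x - (c₁ * t) • Ω₀) Ω₀ := by
    rw [divVF_smul_const _ x hfd.differentiableAt Ω₀, hfd.fderiv]
  rw [hd, hdiv, map_smul]
  simp [smul_eq_mul]

private lemma gradient_translate (f : E → ℝ) (hf : ContDiff ℝ (⊤ : ℕ∞) f) (c x : E) :
    gradient (fun y => f (y - c)) x = gradient f (x - c) := by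
  unfold gradient
  rw [(hasFDerivAt_translate f hf c x).fderiv]

private lemma perp_decomp (Ω₀ g : E) (hΩ₀ : ‖Ω₀‖ = 1) :
    g - ⟪Ω₀, g⟫ • Ω₀ = ⟪g, perp Ω₀⟫ • perp Ω₀ := by
  have hn : Ω₀ 0 * Ω₀ 0 + Ω₀ 1 * Ω₀ 1 = 1 := by
    have h : ⟪Ω₀, Ω₀⟫ = 1 := by
      rw [real_inner_self_eq_norm_sq, hΩ₀]; norm_num
    simp only [PiLp.inner_apply, Fin.sum_univ_two, RCLike.inner_apply, conj_trivial] at h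
    linarith
  ext j
  fin_cases j
  · simp [perp, PiLp.inner_apply, Fin.sum_univ_two, EuclideanSpace.single_apply, smul_eq_mul]
    linear_combination (-g 0) * hn
  · simp [perp, PiLp.inner_apply, Fin.sum_univ_two, EuclideanSpace.single_apply, smul_eq_mul]
    linear_combination (-g 1) * hn

theorem stmt8 (c₁ c₂ κ : ℝ) (hc₁ : 0 < c₁) (hc₂ : 0 < c₂) (hκ : 0 < κ)
    (Ω₀ : E) (hΩ₀ : ‖Ω₀‖ = 1)
    (ρ₀ ωbar₀ : E → ℝ)
    (hρ₀ : ContDiff ℝ (⊤ : ℕ∞) ρ₀) (hωbar₀ : ContDiff ℝ (⊤ : ℕ∞) ωbar₀)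
    (hρ₀pos : ∀ x, 0 < ρ₀ x)
    -- well-preparedness constraint: ρ₀ ω̄₀ = (1/κ) ∇ρ₀ · Ω₀^⊥
    (hconstraint : ∀ x, ρ₀ x * ωbar₀ x = (1 / κ) * ⟪gradient ρ₀ x, perp Ω₀⟫)
    (ρ ωbar : ℝ → E → ℝ) (Ω : ℝ → E → E)
    (hρ : ∀ t x, ρ t x = ρ₀ (x - (c₁ * t) • Ω₀))
    (hωbar : ∀ t x, ωbar t x = ωbar₀ (x - (c₁ * t) • Ω₀))
    (hΩ : ∀ t x, Ω t x = Ω₀) :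
    -- (ρ, Ω, ω̄) solves the macroscopic Vicsek--Kuramoto system
    (∀ t x, deriv (fun s => ρ s x) t
        + c₁ * divVF (fun y => ρ t y • Ω t y) x = 0) ∧
    (∀ t x, deriv (fun s => ρ s x * ωbar s x) t
        + c₁ * divVF (fun y => (ρ t y * ωbar t y) • Ω t y) x = 0) ∧
    (∀ t x, ρ t x • (deriv (fun s => Ω s x) t
          + c₂ • fderiv ℝ (fun y => Ω t y) x (Ω t x)
          - ωbar t x • perp (Ω t x))
        + (1 / κ) • (gradient (fun y => ρ t y) x
          - ⟪Ω t x, gradient (fun y => ρ t y) x⟫ • Ω t x) = 0) := by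
  refine ⟨?_, ?_, ?_⟩
  · intro t x
    simp only [hρ, hΩ]
    exact transport_eq ρ₀ hρ₀ c₁ Ω₀ t x
  · intro t x
    simp only [hρ, hωbar, hΩ]
    exact transport_eq (fun y => ρ₀ y * ωbar₀ y) (hρ₀.mul hωbar₀) c₁ Ω₀ t x
  · intro t x
    simp only [hρ, hωbar, hΩ]
    set y := x - (c₁ * t) • Ω₀ with hy
    rw [gradient_translate ρ₀ hρ₀ _ x]
    set g := gradient ρ₀ y with hg
    rw [perp_decomp Ω₀ g hΩ₀]
    have hc := hconstraint y
    rw [← hg] at hc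
    simp only [deriv_const', fderiv_fun_const, Pi.zero_apply, ContinuousLinearMap.zero_apply,
      smul_zero, zero_add, zero_sub]
    have key : ρ₀ y • (-(ωbar₀ y • perp Ω₀)) + (1 / κ) • (⟪g, perp Ω₀⟫ • perp Ω₀)
        = ((1 / κ) * ⟪g, perp Ω₀⟫ - ρ₀ y * ωbar₀ y) • perp Ω₀ := by
      module
    rw [key, ← hc, sub_self, zero_smul]
end

section
/- For smooth 2π-periodic f(θ), the operator I_θ(f) = k_θ ∂_θ(f sin(θ − θ̄)) + α² ∂²_θ f (θ̄ a fixed constant) admits the factorization I_θ(f) = α² ∂_θ [ N_{θ̄} ∂_θ (f / N_{θ̄}) ], where N_{θ̄}(θ) = C₂ exp((k_θ/α²) cos(θ − θ̄)). -/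
open Real MeasureTheory intervalIntegral

/-- Modified Bessel function of the first kind, order 0. -/
noncomputable def besselI0 (κ : ℝ) : ℝ :=
  (1 / (2 * π)) * ∫ γ in (-π)..π, Real.exp (κ * Real.cos γ)

/-- Von Mises equilibrium distribution in the orientation variable. -/
noncomputable def vonMises (kθ α θbar : ℝ) (θ : ℝ) : ℝ :=
  (1 / (2 * π * besselI0 (kθ / α ^ 2))) *
    Real.exp ((kθ / α ^ 2) * Real.cos (θ - θbar))

lemma besselI0_pos (κ : ℝ) : 0 < besselI0 κ := by
  unfold besselI0
  have h2 : 0 < ∫ γ in (-π)..π, Real.exp (κ * Real.cos γ) := by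
    apply intervalIntegral.intervalIntegral_pos_of_pos_on
    · exact (Real.continuous_exp.comp (continuous_const.mul Real.continuous_cos)).intervalIntegrable _ _
    · intro x _; exact Real.exp_pos _
    · linarith [Real.pi_pos]
  have := Real.pi_pos
  positivity

theorem stmt13 (kθ α θbar : ℝ) (hkθ : 0 < kθ) (hα : 0 < α)
    (f : ℝ → ℝ) (hf : ContDiff ℝ (⊤ : ℕ∞) f)
    (hper : ∀ θ, f (θ + 2 * π) = f θ) :
    ∀ θ : ℝ,
      kθ * deriv (fun θ' => f θ' * Real.sin (θ' - θbar)) θ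
        + α ^ 2 * deriv (fun θ' => deriv f θ') θ
      = α ^ 2 * deriv (fun θ' =>
          vonMises kθ α θbar θ' *
            deriv (fun u => f u / vonMises kθ α θbar u) θ') θ := by
  intro θ
  set κ := kθ / α ^ 2 with hκ
  have hπ := Real.pi_pos
  have hI0 := besselI0_pos κ
  set C := (1 / (2 * π * besselI0 κ)) with hC
  have hCpos : 0 < C := by positivity
  have hfd : Differentiable ℝ f := hf.differentiable (by simp)
  have hfd' : Differentiable ℝ (deriv f) :=
    (contDiff_infty_iff_deriv.mp (hf.of_le (by simp))).2.differentiable (by simp)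
  -- derivative of the von Mises density
  have hNd : ∀ u : ℝ, HasDerivAt (vonMises kθ α θbar)
      (-(κ * Real.sin (u - θbar)) * vonMises kθ α θbar u) u := by
    intro u
    have h1 : HasDerivAt (fun x : ℝ => x - θbar) 1 u := (hasDerivAt_id u).sub_const θbar
    have h2 : HasDerivAt (fun x : ℝ => Real.cos (x - θbar)) (-Real.sin (u - θbar)) u := by
      simpa [Function.comp_def] using (Real.hasDerivAt_cos (u - θbar)).comp u h1
    have h3 : HasDerivAt (fun x : ℝ => κ * Real.cos (x - θbar))
        (κ * -Real.sin (u - θbar)) u := h2.const_mul κ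
    have h4 : HasDerivAt (fun x : ℝ => Real.exp (κ * Real.cos (x - θbar)))
        (Real.exp (κ * Real.cos (u - θbar)) * (κ * -Real.sin (u - θbar))) u :=
      by have := (Real.hasDerivAt_exp (κ * Real.cos (u - θbar))).comp u h3; exact this
    have h5 := h4.const_mul C
    have : vonMises kθ α θbar = fun x => C * Real.exp (κ * Real.cos (x - θbar)) := rfl
    rw [this]
    refine h5.congr_deriv ?_
    beta_reduce
    ring
  have hNne : ∀ u, vonMises kθ α θbar u ≠ 0 := by
    intro u
    have : 0 < vonMises kθ α θbar u := by
      have := Real.exp_pos (κ * Real.cos (u - θbar))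
      unfold vonMises
      rw [← hκ]
      positivity
    exact ne_of_gt this
  -- inner flux identity
  have hinner : ∀ u, vonMises kθ α θbar u * deriv (fun x => f x / vonMises kθ α θbar x) u
      = deriv f u + κ * Real.sin (u - θbar) * f u := by
    intro u
    have hq : HasDerivAt (fun x => f x / vonMises kθ α θbar x)
        ((deriv f u * vonMises kθ α θbar u
          - f u * (-(κ * Real.sin (u - θbar)) * vonMises kθ α θbar u))
          / (vonMises kθ α θbar u) ^ 2) u :=
      (hfd u).hasDerivAt.div (hNd u) (hNne u)
    rw [hq.deriv]
    field_simp [hNne u]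
    ring
  have hfun : (fun θ' => vonMises kθ α θbar θ' *
      deriv (fun u => f u / vonMises kθ α θbar u) θ')
      = fun θ' => deriv f θ' + κ * Real.sin (θ' - θbar) * f θ' := funext hinner
  rw [hfun]
  have hs : ∀ u : ℝ, HasDerivAt (fun x : ℝ => Real.sin (x - θbar)) (Real.cos (u - θbar)) u := by
    intro u
    have h1 : HasDerivAt (fun x : ℝ => x - θbar) 1 u := (hasDerivAt_id u).sub_const θbar
    simpa [Function.comp_def] using (Real.hasDerivAt_sin (u - θbar)).comp u h1
  have hL : HasDerivAt (fun x => f x * Real.sin (x - θbar))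
      (deriv f θ * Real.sin (θ - θbar) + f θ * Real.cos (θ - θbar)) θ :=
    (hfd θ).hasDerivAt.mul (hs θ)
  have hR : HasDerivAt (fun x => deriv f x + κ * Real.sin (x - θbar) * f x)
      (deriv (deriv f) θ + κ * (Real.cos (θ - θbar) * f θ + Real.sin (θ - θbar) * deriv f θ)) θ := by
    have h1 : HasDerivAt (deriv f) (deriv (deriv f) θ) θ := (hfd' θ).hasDerivAt
    have h2 : HasDerivAt (fun x => Real.sin (x - θbar) * f x)
        (Real.cos (θ - θbar) * f θ + Real.sin (θ - θbar) * deriv f θ) θ :=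
      (hs θ).mul (hfd θ).hasDerivAt
    have := h1.add (h2.const_mul κ)
    simpa [mul_assoc, Pi.add_def] using this
  rw [hL.deriv, hR.deriv]
  have hder2 : deriv (fun θ' => deriv f θ') θ = deriv (deriv f) θ := rfl
  rw [hder2, hκ]
  have hα2 : (α : ℝ) ^ 2 ≠ 0 := by positivity
  field_simp
  ring
end
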